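/- arXiv:1305.4047 — 8 statements merged into one kernel-verified Lean document; each statement's English description precedes it below -/
import Mathlib

section
/- If the characteristic polynomial of θ, viewed as a K-linear endomorphism of L, is square-free, then for every nonzero θ-polynomial P of θ-degree t, the root-space {v ∈ L : P(v) = 0} is a K-subspace of L of dimension at most t. -/
/-!
Squarefreeness of the characteristic polynomial makes the eigenvalue `1` of `θ` simple, so the
`θ`-fixed vectors form a line. Now induct on the `θ`-degree. If `P` of degree `t + 1` has a
nonzero root `v`, then `Q(w) = P(v w)` has the same root-space up to the isomorphism `w ↦ v w`,
and its coefficients sum to `Q(1) = 0`. Abel summation then factors `Q = R ∘ (θ - 1)` with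
`R` of degree `t`, whence `dim ker P = dim ker Q ≤ dim ker R + dim ker (θ - 1) ≤ t + 1`.
-/

open Polynomial

/-- Evaluation of a θ-polynomial: `P(v) = ∑ p_i θ^i(v)`. -/
noncomputable def skewEval {K L : Type*} [Field K] [Field L] [Algebra K L]
    (θ : L ≃ₐ[K] L) (p : L[X]) (v : L) : L :=
  ∑ i ∈ p.support, p.coeff i * (θ ^ i) v

/-- The evaluation map of a θ-polynomial as a K-linear endomorphism of L. -/
noncomputable def skewEvalLinear {K L : Type*} [Field K] [Field L] [Algebra K L]
    (θ : L ≃ₐ[K] L) (p : L[X]) : L →ₗ[K] L :=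
  ∑ i ∈ p.support, LinearMap.mulLeft K (p.coeff i) ∘ₗ (θ ^ i).toLinearMap

open Module Finset LinearMap

theorem Polynomial.rootMultiplicity_le_one_of_squarefree {K : Type*} [Field K] {p : K[X]}
    (hp : Squarefree p) (a : K) : p.rootMultiplicity a ≤ 1 := by
  by_contra! h
  have hdvd : (X - C a) ^ 2 ∣ p := (le_rootMultiplicity_iff hp.ne_zero).mp h
  exact not_isUnit_X_sub_C a (hp _ (by rwa [← sq]))

theorem Module.End.finrank_eigenspace_le_one_of_squarefree {K M : Type*} [Field K]
    [AddCommGroup M] [Module K M] [FiniteDimensional K M] {f : End K M}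
    (hf : Squarefree f.charpoly) (μ : K) : finrank K (f.eigenspace μ) ≤ 1 :=
  (LinearMap.finrank_eigenspace_le f μ).trans (rootMultiplicity_le_one_of_squarefree hf μ)

section KernelDimension

variable {K M M' M'' : Type*} [Field K] [AddCommGroup M] [Module K M] [AddCommGroup M']
  [Module K M'] [AddCommGroup M''] [Module K M''] [FiniteDimensional K M]

theorem LinearMap.finrank_ker_comp_le [FiniteDimensional K M'] (f : M' →ₗ[K] M'')
    (g : M →ₗ[K] M') : finrank K (ker (f ∘ₗ g)) ≤ finrank K (ker f) + finrank K (ker g) := by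
  have h := LinearMap.lift_rank_comap_le (f := g) (ker f)
  rw [← ker_comp] at h
  simp only [← finrank_eq_rank, Cardinal.lift_natCast] at h
  exact_mod_cast h

theorem LinearMap.finrank_ker_le_finrank_ker_comp_of_surjective (f : M' →ₗ[K] M'')
    {g : M →ₗ[K] M'} (hg : Function.Surjective g) :
    finrank K (ker f) ≤ finrank K (ker (f ∘ₗ g)) :=
  calc finrank K (ker f) = finrank K ((ker f).comap g |>.map g) := by
        rw [Submodule.map_comap_eq_of_surjective hg]
    _ ≤ finrank K (ker (f ∘ₗ g)) := Submodule.finrank_map_le _ _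

end KernelDimension

section SkewEval

variable {K L : Type*} [Field K] [Field L] [Algebra K L] (θ : L ≃ₐ[K] L)

noncomputable def skewEvalCoeffs (a : ℕ → L) (n : ℕ) : L →ₗ[K] L :=
  ∑ i ∈ range (n + 1), LinearMap.mulLeft K (a i) ∘ₗ (θ ^ i).toLinearMap

theorem skewEvalCoeffs_apply (a : ℕ → L) (n : ℕ) (w : L) :
    skewEvalCoeffs θ a n w = ∑ i ∈ range (n + 1), a i * (θ ^ i) w := by
  simp [skewEvalCoeffs, LinearMap.sum_apply]

theorem skewEvalLinear_eq_skewEvalCoeffs (p : L[X]) :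
    skewEvalLinear θ p = skewEvalCoeffs θ p.coeff p.natDegree := by
  refine sum_subset p.supp_subset_range_natDegree_succ fun i _ hi => ?_
  rw [notMem_support_iff.mp hi, LinearMap.mulLeft_zero_eq_zero, LinearMap.zero_comp]

theorem skewEvalCoeffs_comp_mulLeft (a : ℕ → L) (n : ℕ) (v : L) :
    skewEvalCoeffs θ a n ∘ₗ LinearMap.mulLeft K v =
      skewEvalCoeffs θ (fun i => a i * (θ ^ i) v) n := by
  ext w
  simp only [LinearMap.comp_apply, LinearMap.mulLeft_apply, skewEvalCoeffs_apply, map_mul,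
    mul_assoc]

/-- Abel summation: a θ-polynomial vanishing at `1` is right divisible by `X^θ - X`. -/
theorem skewEvalCoeffs_succ_eq_comp_sub_one {b : ℕ → L} {n : ℕ}
    (hb : ∑ i ∈ range (n + 2), b i = 0) :
    skewEvalCoeffs θ b (n + 1) =
      skewEvalCoeffs θ (fun j => ∑ i ∈ Ioc j (n + 1), b i) n ∘ₗ (θ.toLinearMap - 1) := by
  ext w
  have hstep : ∀ j : ℕ, (θ ^ j) (θ w - w) = (θ ^ (j + 1)) w - (θ ^ j) w := fun j => by
    rw [map_sub, pow_succ, AlgEquiv.mul_apply]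
  rw [LinearMap.comp_apply, skewEvalCoeffs_apply, skewEvalCoeffs_apply]
  calc ∑ i ∈ range (n + 1 + 1), b i * (θ ^ i) w
      = ∑ i ∈ range (n + 2), b i * ((θ ^ i) w - (θ ^ 0) w) := by
        simp only [mul_sub, sum_sub_distrib, ← sum_mul, hb, zero_mul, sub_zero]
    _ = ∑ i ∈ range (n + 2), ∑ j ∈ range i, b i * (θ ^ j) (θ w - w) := by
        simp only [hstep, ← mul_sum, sum_range_sub fun j => (θ ^ j) w]
    _ = ∑ j ∈ range (n + 1), ∑ i ∈ Ioc j (n + 1), b i * (θ ^ j) (θ w - w) :=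
        sum_comm' fun i j => by simp only [mem_range, mem_Ioc]; omega
    _ = _ := by simp [sum_mul]

theorem finrank_ker_skewEvalCoeffs_le [FiniteDimensional K L]
    (hfix : finrank K (ker (θ.toLinearMap - 1)) ≤ 1) (n : ℕ) (a : ℕ → L) (ha : a n ≠ 0) :
    finrank K (ker (skewEvalCoeffs θ a n)) ≤ n := by
  induction n generalizing a with
  | zero =>
    have hker : ker (skewEvalCoeffs θ a 0) = ⊥ :=
      ker_eq_bot'.mpr fun w hw => by simpa [skewEvalCoeffs_apply, ha] using hw
    simp [hker]
  | succ n ih =>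
    rcases eq_or_ne (ker (skewEvalCoeffs θ a (n + 1))) ⊥ with hker | hker
    · rw [hker, finrank_bot]
      exact Nat.zero_le _
    obtain ⟨v, hv, hv0⟩ := (Submodule.ne_bot_iff _).mp hker
    set b : ℕ → L := fun i => a i * (θ ^ i) v
    have hb : ∑ i ∈ range (n + 2), b i = 0 := by
      simpa only [skewEvalCoeffs_apply] using mem_ker.mp hv
    have hsurj : Function.Surjective (LinearMap.mulLeft K v) := fun w =>
      ⟨v⁻¹ * w, mul_inv_cancel_left₀ hv0 w⟩
    have hR : ∑ i ∈ Ioc n (n + 1), b i ≠ 0 := by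
      rw [Nat.Ioc_succ_singleton, sum_singleton]
      exact mul_ne_zero ha ((map_ne_zero_iff _ (θ ^ (n + 1)).injective).mpr hv0)
    calc finrank K (ker (skewEvalCoeffs θ a (n + 1)))
        ≤ finrank K (ker (skewEvalCoeffs θ b (n + 1))) := by
          rw [← skewEvalCoeffs_comp_mulLeft]
          exact finrank_ker_le_finrank_ker_comp_of_surjective _ hsurj
      _ ≤ n + 1 := by
          rw [skewEvalCoeffs_succ_eq_comp_sub_one θ hb]
          grw [finrank_ker_comp_le, ih _ hR, hfix]

end SkewEval

/-- If the characteristic polynomial of θ as a K-linear map is square-free, then the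
root-space of a nonzero θ-polynomial of θ-degree t has K-dimension at most t. -/
theorem rootspace_dim_le_degree {K L : Type*} [Field K] [Field L] [Algebra K L]
    [FiniteDimensional K L] (θ : L ≃ₐ[K] L)
    (hsf : Squarefree (LinearMap.charpoly θ.toLinearMap))
    (p : L[X]) (hp : p ≠ 0) :
    Module.finrank K (LinearMap.ker (skewEvalLinear θ p)) ≤ p.natDegree := by
  have hfix : finrank K (ker (θ.toLinearMap - 1)) ≤ 1 := by
    have h := Module.End.finrank_eigenspace_le_one_of_squarefree hsf (1 : K)
    rwa [Module.End.eigenspace_def, one_smul] at h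
  rw [skewEvalLinear_eq_skewEvalCoeffs]
  exact finrank_ker_skewEvalCoeffs_le θ hfix _ _ (leadingCoeff_ne_zero.mpr hp)
end

section
/- In the field extension ℚ ↪ ℚ[Y]/(Y^8+1) with α a root of Y^8+1 and θ the automorphism determined by α ↦ α^3, the θ-polynomial X^θ − X (i.e., θ(v) − v) has a root-space of K-dimension 2, generated by 1 and α^2 + α^6; in particular the root-space dimension exceeds the θ-degree. -/
/-!
Since `α ^ 8 = -1`, the automorphism `θ` sends the basis vector `α ^ j` to `α ^ (3 * j)`, which is
`± α ^ (3 * j % 8)`; so on coordinates with respect to `1, α, …, α ^ 7` it acts by a signed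
permutation. Comparing the coordinates of `θ v` and `v` forces those of `α, α ^ 3, α ^ 4, α ^ 5,
α ^ 7` to vanish (characteristic zero) and those of `α ^ 2` and `α ^ 6` to agree.
-/

open Module

section

variable {K L : Type*} [Field K] [CommRing L] [Algebra K L] {α : L}

def cubeCoeffs (c : Fin 8 → K) : Fin 8 → K := ![c 0, -c 3, c 6, c 1, -c 4, c 7, c 2, -c 5]

lemma map_sum_smul_pow (hα : α ^ 8 = -1) {θ : L ≃ₐ[K] L} (hθ : θ α = α ^ 3) (c : Fin 8 → K) :
    θ (∑ i, c i • α ^ (i : ℕ)) = ∑ i, cubeCoeffs c i • α ^ (i : ℕ) := by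
  simp only [map_sum, map_smul, map_pow, hθ]
  simp only [Algebra.smul_def, Fin.sum_univ_eight, Fin.isValue, Fin.coe_ofNat_eq_mod, Nat.zero_mod,
    pow_zero, mul_one, Nat.one_mod, pow_one, Nat.reduceMod, Nat.mod_succ, cubeCoeffs,
    Matrix.cons_val_zero, Matrix.cons_val_one, map_neg, neg_mul, Matrix.cons_val]
  linear_combination (algebraMap K L (c 3) * α + algebraMap K L (c 4) * α ^ 4
    + algebraMap K L (c 5) * α ^ 7 + algebraMap K L (c 6) * α ^ 2 * (α ^ 8 - 1)
    + algebraMap K L (c 7) * α ^ 5 * (α ^ 8 - 1)) * hα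

lemma eq_of_cubeCoeffs_eq [CharZero K] {c : Fin 8 → K} (h : cubeCoeffs c = c) :
    c = ![c 0, 0, c 2, 0, 0, 0, c 2, 0] := by
  have h1 : -c 3 = c 1 := congrFun h 1
  have h3 : c 1 = c 3 := congrFun h 3
  have h4 : -c 4 = c 4 := congrFun h 4
  have h5 : c 7 = c 5 := congrFun h 5
  have h6 : c 2 = c 6 := congrFun h 6
  have h7 : -c 5 = c 7 := congrFun h 7
  have hc1 : c 1 = 0 := self_eq_neg.mp (by linear_combination h3 - h1)
  have hc4 : c 4 = 0 := self_eq_neg.mp h4.symm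
  have hc5 : c 5 = 0 := self_eq_neg.mp (by linear_combination -h5 - h7)
  ext i
  fin_cases i <;> simp [hc1, ← h3, hc4, hc5, h5, h6]

lemma sum_smul_pow_eq (x y : K) :
    ∑ i, ![x, 0, y, 0, 0, 0, y, 0] i • α ^ (i : ℕ) = x • 1 + y • (α ^ 2 + α ^ 6) := by
  simp [Fin.sum_univ_eight, smul_add, add_assoc]

lemma map_pow_two_add_pow_six (hα : α ^ 8 = -1) {θ : L ≃ₐ[K] L} (hθ : θ α = α ^ 3) :
    θ (α ^ 2 + α ^ 6) = α ^ 2 + α ^ 6 := by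
  rw [map_add, map_pow, map_pow, hθ]
  linear_combination α ^ 2 * (α ^ 8 - 1) * hα

variable {b : Basis (Fin 8) K L}

lemma sum_repr_smul_pow (hb : ∀ i, b i = α ^ (i : ℕ)) (v : L) :
    ∑ i, b.repr v i • α ^ (i : ℕ) = v := by
  simpa only [hb] using b.sum_repr v

lemma repr_sum_smul_pow (hb : ∀ i, b i = α ^ (i : ℕ)) (c : Fin 8 → K) :
    ⇑(b.repr (∑ i, c i • α ^ (i : ℕ))) = c := by
  simpa only [hb] using b.repr_sum_self c

lemma linearIndependent_one_pow_two_add_pow_six (hb : ∀ i, b i = α ^ (i : ℕ)) :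
    LinearIndependent K ![1, α ^ 2 + α ^ 6] := by
  refine LinearIndependent.pair_iff.mpr fun x y hxy ↦ ?_
  have hc := repr_sum_smul_pow hb ![x, 0, y, 0, 0, 0, y, 0]
  rw [sum_smul_pow_eq, hxy, map_zero] at hc
  exact ⟨(congrFun hc 0).symm, (congrFun hc 2).symm⟩

variable [CharZero K]

lemma exists_eq_of_map_eq_self (hα : α ^ 8 = -1) {θ : L ≃ₐ[K] L} (hθ : θ α = α ^ 3)
    (hb : ∀ i, b i = α ^ (i : ℕ)) {v : L} (hv : θ v = v) :
    ∃ x y : K, x • 1 + y • (α ^ 2 + α ^ 6) = v := by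
  set c := ⇑(b.repr v)
  have hv' : ∑ i, c i • α ^ (i : ℕ) = v := sum_repr_smul_pow hb v
  have hc : cubeCoeffs c = c := by
    rw [← repr_sum_smul_pow hb (cubeCoeffs c), ← map_sum_smul_pow hα hθ, hv', hv]
  refine ⟨c 0, c 2, ?_⟩
  rw [← sum_smul_pow_eq, ← eq_of_cubeCoeffs_eq hc, hv']

lemma ker_sub_id_eq_span (hα : α ^ 8 = -1) {θ : L ≃ₐ[K] L} (hθ : θ α = α ^ 3)
    (hb : ∀ i, b i = α ^ (i : ℕ)) :
    LinearMap.ker (θ.toLinearMap - LinearMap.id : L →ₗ[K] L) =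
      Submodule.span K {1, α ^ 2 + α ^ 6} := by
  ext v
  rw [LinearMap.mem_ker, LinearMap.sub_apply, AlgEquiv.toLinearMap_apply, LinearMap.id_apply,
    sub_eq_zero, Submodule.mem_span_pair]
  refine ⟨exists_eq_of_map_eq_self hα hθ hb, ?_⟩
  rintro ⟨x, y, rfl⟩
  rw [map_add, map_smul, map_smul, map_one, map_pow_two_add_pow_six hα hθ]

end

/-- In L = ℚ[Y]/(Y⁸+1) with θ(α) = α³, the root-space of the θ-polynomial X^θ − X,
i.e. the fixed space of θ, is the ℚ-span of 1 and α² + α⁶ and has ℚ-dimension 2,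
exceeding the θ-degree 1. -/
theorem fixed_space_of_theta_example {L : Type*} [Field L] [Algebra ℚ L]
    (α : L) (hα : α ^ 8 = -1)
    (b : Module.Basis (Fin 8) ℚ L) (hb : ∀ i : Fin 8, b i = α ^ (i : ℕ))
    (θ : L ≃ₐ[ℚ] L) (hθ : θ α = α ^ 3) :
    LinearMap.ker (θ.toLinearMap - LinearMap.id : L →ₗ[ℚ] L) =
      Submodule.span ℚ {1, α ^ 2 + α ^ 6} ∧
    Module.finrank ℚ (LinearMap.ker (θ.toLinearMap - LinearMap.id : L →ₗ[ℚ] L)) = 2 ∧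
    1 < Module.finrank ℚ (LinearMap.ker (θ.toLinearMap - LinearMap.id : L →ₗ[ℚ] L)) := by
  have hker := ker_sub_id_eq_span hα hθ hb
  have hrank : finrank ℚ (LinearMap.ker (θ.toLinearMap - LinearMap.id : L →ₗ[ℚ] L)) = 2 := by
    rw [hker, ← Matrix.range_cons_cons_empty, finrank_span_eq_card
      (linearIndependent_one_pow_two_add_pow_six hb), Fintype.card_fin]
  exact ⟨hker, hrank, by omega⟩
end

section
/- The characteristic polynomial of the automorphism α ↦ α^3 of ℚ[Y]/(Y^8+1), regarded as a ℚ-linear map, is Y^8 − 2Y^4 + 1 = (Y^4 − 1)^2, which is not square-free. -/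
/-!
In the basis `α ^ i` the automorphism sends `α ^ j` to `α ^ (3 j) = ± α ^ (3 j mod 8)`, so its
matrix is a signed permutation matrix. Grouping the basis along the orbits of `j ↦ 3 j mod 8`
makes it block diagonal with `2 × 2` blocks whose characteristic polynomials are `X ^ 2 - 1`,
`X ^ 2 + 1`, `X ^ 2 - 1`, `X ^ 2 + 1`; their product is `(X ^ 4 - 1) ^ 2`, the square of a
non-unit.
-/

open Polynomial

theorem pow_eq_neg_one_pow_mul_pow_mod {M : Type*} [Monoid M] [HasDistribNeg M] {α : M} {n : ℕ}
    (hα : α ^ n = -1) (m : ℕ) : α ^ m = (-1) ^ (m / n) * α ^ (m % n) := by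
  conv_lhs => rw [← Nat.div_add_mod m n, pow_add, pow_mul, hα]

def negacyclicPowMatrix (R : Type*) [Ring R] (n k : ℕ) : Matrix (Fin n) (Fin n) R :=
  Matrix.of fun i j => if (i : ℕ) = k * j % n then (-1) ^ (k * j / n) else 0

theorem toMatrix_eq_negacyclicPowMatrix {R A : Type*} [CommRing R] [Ring A] [Algebra R A]
    {n k : ℕ} {α : A} (hα : α ^ n = -1) (b : Module.Basis (Fin n) R A)
    (hb : ∀ i, b i = α ^ (i : ℕ)) (θ : A →ₐ[R] A) (hθ : θ α = α ^ k) :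
    LinearMap.toMatrix b b θ.toLinearMap = negacyclicPowMatrix R n k := by
  ext i j
  have hθb : θ (b j) = ((-1 : R) ^ (k * j / n)) • b ⟨k * j % n, Nat.mod_lt _ j.pos⟩ := by
    rw [hb, hb, map_pow, hθ, ← pow_mul, pow_eq_neg_one_pow_mul_pow_mod hα, Algebra.smul_def,
      map_pow, map_neg, map_one]
  rw [LinearMap.toMatrix_apply, AlgHom.toLinearMap_apply, hθb]
  simp [negacyclicPowMatrix, Finsupp.single_apply, Fin.ext_iff, eq_comm]

theorem Matrix.charpoly_blockDiagonal {o n R : Type*} [Fintype o] [DecidableEq o] [Fintype n]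
    [DecidableEq n] [CommRing R] (M : o → Matrix n n R) :
    (blockDiagonal M).charpoly = ∏ k, (M k).charpoly := by
  have hcharmatrix : charmatrix (blockDiagonal M) = blockDiagonal fun k => charmatrix (M k) := by
    ext ⟨i, k⟩ ⟨j, k'⟩
    by_cases hk : k = k' <;> by_cases hij : i = j <;> simp [blockDiagonal_apply, hk, hij]
  rw [charpoly, hcharmatrix, det_blockDiagonal]
  rfl

/-- The orbits of `j ↦ 3 j mod 8`, with the two fixed points `0` and `4` put in one block. -/
def orbitPairing : Fin 2 × Fin 4 ≃ Fin 8 where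
  toFun p := ![![0, 1, 2, 5], ![4, 3, 6, 7]] p.1 p.2
  invFun := ![(0, 0), (0, 1), (0, 2), (1, 1), (1, 0), (0, 3), (1, 2), (1, 3)]
  left_inv := by decide
  right_inv := by decide

theorem reindex_negacyclicPowMatrix_eight_three (R : Type*) [CommRing R] :
    (negacyclicPowMatrix R 8 3).reindex orbitPairing.symm orbitPairing.symm =
      Matrix.blockDiagonal
        ![!![1, 0; 0, -1], !![0, -1; 1, 0], !![0, 1; 1, 0], !![0, 1; -1, 0]] := by
  ext ⟨l, k⟩ ⟨l', k'⟩
  fin_cases l <;> fin_cases k <;> fin_cases l' <;> fin_cases k' <;>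
    simp [negacyclicPowMatrix, orbitPairing, Matrix.blockDiagonal_apply]

theorem charpoly_negacyclicPowMatrix_eight_three (R : Type*) [CommRing R] [Nontrivial R] :
    (negacyclicPowMatrix R 8 3).charpoly = (X ^ 4 - 1) ^ 2 := by
  rw [← Matrix.charpoly_reindex orbitPairing.symm, reindex_negacyclicPowMatrix_eight_three,
    Matrix.charpoly_blockDiagonal, Fin.prod_univ_four]
  simp only [Matrix.charpoly_fin_two, Matrix.trace_fin_two, Matrix.det_fin_two, Matrix.of_apply,
    Matrix.cons_val_zero, Matrix.cons_val_one, Matrix.cons_val, map_add, map_sub, map_mul, map_neg,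
    map_one, map_zero]
  ring

/-- The characteristic polynomial of the automorphism α ↦ α³ of ℚ[Y]/(Y⁸+1), as a
ℚ-linear map, is Y⁸ − 2Y⁴ + 1 = (Y⁴ − 1)², which is not square-free. -/
theorem charpoly_of_theta_example {L : Type*} [Field L] [Algebra ℚ L]
    [FiniteDimensional ℚ L]
    (α : L) (hα : α ^ 8 = -1)
    (b : Module.Basis (Fin 8) ℚ L) (hb : ∀ i : Fin 8, b i = α ^ (i : ℕ))
    (θ : L ≃ₐ[ℚ] L) (hθ : θ α = α ^ 3) :
    LinearMap.charpoly θ.toLinearMap = X ^ 8 - 2 * X ^ 4 + 1 ∧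
    LinearMap.charpoly θ.toLinearMap = (X ^ 4 - 1) ^ 2 ∧
    ¬ Squarefree (LinearMap.charpoly θ.toLinearMap) := by
  have hmatrix := toMatrix_eq_negacyclicPowMatrix hα b hb (θ : L →ₐ[ℚ] L) hθ
  rw [AlgEquiv.toAlgHom_toLinearMap] at hmatrix
  have hcharpoly : LinearMap.charpoly θ.toLinearMap = (X ^ 4 - 1) ^ 2 := by
    rw [← LinearMap.charpoly_toMatrix _ b, hmatrix, charpoly_negacyclicPowMatrix_eight_three]
  refine ⟨by rw [hcharpoly]; ring, hcharpoly, fun hsq => ?_⟩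
  rw [hcharpoly] at hsq
  simpa using hsq.eq_zero_or_one_of_pow_of_not_isUnit (not_isUnit_X_pow_sub_one ℚ 4)
end

section
/- For any vector X ∈ L^N, the θ-degree of the monic generator of the left ideal I_X of θ-polynomials vanishing on all coordinates of X equals the L-rank of the n×N Moore-type matrix X^θ whose (i,j) entry is θ^{i-1}(x_j). -/
open Polynomial

/-!
A θ-polynomial `q` vanishes on all `x j` exactly when its coefficients give a linear relation
`∑ q_i • r_i = 0` among the rows `r_i = (θ^i(x_j))_j`, and applying `θ^k` to a relation shifts it
by `k`. For the minimal vanishing `p` of degree `d`, the shifted relations express every row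
`r_{d+k}` through the previous `d` rows, while a relation among `r_0, …, r_{d-1}` would be a
vanishing θ-polynomial of degree `< d`. Hence the rows span a space with basis `r_0, …, r_{d-1}`;
since `θ^n = 1` gives `r_n = r_0`, also `d ≤ n`, so this basis consists of rows of `X^θ`.
-/

open Submodule Set Module

theorem finrank_span_range_fin_eq {L V : Type*} [DivisionRing L] [AddCommGroup V] [Module L V]
    (r : ℕ → V) {d n : ℕ} (hdn : d ≤ n) (hind : LinearIndependent L fun t : Fin d => r t)
    (hspan : ∀ i, r i ∈ span L (range fun t : Fin d => r t)) :
    finrank L (span L (range fun i : Fin n => r i)) = d := by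
  have heq : span L (range fun i : Fin n => r i) = span L (range fun t : Fin d => r t) := by
    apply le_antisymm
    · rw [span_le]
      rintro _ ⟨i, rfl⟩
      exact hspan i
    · rw [span_le]
      rintro _ ⟨t, rfl⟩
      exact subset_span ⟨⟨t, t.2.trans_le hdn⟩, rfl⟩
  rw [heq, finrank_span_eq_card hind, Fintype.card_fin]

section MooreRow

variable {K L ι : Type*} [Field K] [Field L] [Algebra K L] (θ : L ≃ₐ[K] L) (x : ι → L)

def mooreRow (i : ℕ) : ι → L := fun j => (θ ^ i) (x j)

theorem skewEval_vanishes_iff (q : L[X]) :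
    (∀ j, skewEval θ q (x j) = 0) ↔ (q.sum fun i c => c • mooreRow θ x i) = 0 := by
  rw [funext_iff]
  simp [skewEval, Polynomial.sum, Finset.sum_apply, mooreRow]

theorem sum_smul_mooreRow_shift {s : Finset ℕ} {c : ℕ → L}
    (h : ∑ i ∈ s, c i • mooreRow θ x i = 0) (k : ℕ) :
    ∑ i ∈ s, (θ ^ k) (c i) • mooreRow θ x (i + k) = 0 := by
  funext j
  have := congrArg (θ ^ k) (congrFun h j)
  simpa [mooreRow, Finset.sum_apply, add_comm _ k, pow_add] using this

theorem mooreRow_mem_span {p : L[X]} (hp : p ≠ 0) (hvan : ∀ j, skewEval θ p (x j) = 0) (i : ℕ) :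
    mooreRow θ x i ∈ span L (range fun t : Fin p.natDegree => mooreRow θ x t) := by
  induction i using Nat.strong_induction_on with
  | _ i ih =>
  obtain hi | ⟨k, rfl⟩ : i < p.natDegree ∨ ∃ k, i = p.natDegree + k :=
    (lt_or_ge i p.natDegree).imp_right fun h => ⟨i - p.natDegree, by omega⟩
  · exact subset_span ⟨⟨i, hi⟩, rfl⟩
  have hrel := (skewEval_vanishes_iff θ x p).1 hvan
  rw [sum_over_range _ fun i => zero_smul L (mooreRow θ x i)] at hrel
  replace hrel := sum_smul_mooreRow_shift θ x hrel k
  rw [Finset.sum_range_succ, add_comm] at hrel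
  have hlead : (θ ^ k) (p.coeff p.natDegree) ≠ 0 :=
    (_root_.map_ne_zero _).2 (leadingCoeff_ne_zero.2 hp)
  refine (smul_mem_iff _ hlead).1 ?_
  rw [eq_neg_of_add_eq_zero_left hrel]
  refine neg_mem (sum_mem fun t ht => smul_mem _ _ (ih _ ?_))
  rw [Finset.mem_range] at ht
  omega

theorem linearIndependent_mooreRow {d : ℕ}
    (hmin : ∀ q : L[X], q ≠ 0 → (∀ j, skewEval θ q (x j) = 0) → d ≤ q.natDegree) :
    LinearIndependent L fun t : Fin d => mooreRow θ x t := by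
  rw [Fintype.linearIndependent_iff]
  intro g hg
  set q := (degreeLTEquiv L d).symm g
  have hcoeff : ∀ t : Fin d, (q : L[X]).coeff t = g t :=
    congrFun ((degreeLTEquiv L d).apply_symm_apply g)
  have hdeg : (q : L[X]).degree < d := mem_degreeLT.1 q.2
  have hq : (q : L[X]) = 0 := by
    by_contra hq
    have hvan : ∀ j, skewEval θ q (x j) = 0 := by
      rw [skewEval_vanishes_iff, ← sum_fin _ (fun i => zero_smul L (mooreRow θ x i)) hdeg]
      simpa [hcoeff] using hg
    exact ((natDegree_lt_iff_degree_lt hq).2 hdeg).not_ge (hmin _ hq hvan)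
  intro t
  rw [← hcoeff t, hq, coeff_zero]

theorem le_orderOf_of_linearIndependent_mooreRow {d : ℕ} (hθ : 0 < orderOf θ)
    (hind : LinearIndependent L fun t : Fin d => mooreRow θ x t) : d ≤ orderOf θ := by
  by_contra! hlt
  have hrow : mooreRow θ x 0 = mooreRow θ x (orderOf θ) :=
    funext fun j => by simp [mooreRow, pow_orderOf_eq_one]
  exact hθ.ne (congrArg Fin.val
    (hind.injective (a₁ := ⟨0, by omega⟩) (a₂ := ⟨orderOf θ, hlt⟩) hrow))

end MooreRow

/-- For X ∈ Lᴺ, the θ-degree of the generator of the left ideal I_X (a nonzero vanishing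
θ-polynomial of minimal degree) equals the L-rank of the n×N Moore matrix (θ^i(x_j)). -/
theorem w0_eq_w1 {K L : Type*} [Field K] [Field L] [Algebra K L]
    (θ : L ≃ₐ[K] L) {n N : ℕ} (hnpos : 0 < n) (hn : orderOf θ = n)
    (x : Fin N → L) (p : L[X]) (hp : p ≠ 0)
    (hvan : ∀ i, skewEval θ p (x i) = 0)
    (hmin : ∀ q : L[X], q ≠ 0 → (∀ i, skewEval θ q (x i) = 0) →
      p.natDegree ≤ q.natDegree) :
    p.natDegree = (Matrix.of fun (i : Fin n) (j : Fin N) => (θ ^ (i : ℕ)) (x j)).rank := by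
  have hind := linearIndependent_mooreRow θ x hmin
  have hdn : p.natDegree ≤ n :=
    hn ▸ le_orderOf_of_linearIndependent_mooreRow θ x (hn ▸ hnpos) hind
  rw [Matrix.rank_eq_finrank_span_row]
  exact (finrank_span_range_fin_eq (mooreRow θ x) hdn hind (mooreRow_mem_span θ x hp hvan)).symm
end

section
/- For any X ∈ L^N, the maximal number of K-linearly independent columns of the matrix X^θ = (θ^i(x_j)) equals the rank of the m×N matrix X_B of coordinates of the x_j in a K-basis B of L; i.e., w_2(X) = w_3(X). -/
/-!
The map `y ↦ (θ ^ i y)ᵢ` is `K`-linear and, as soon as `n > 0`, injective (its `0`-th component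
is the identity), so it carries the span of the `x j` isomorphically onto the span of the columns
of `X^θ`. Likewise the coordinate isomorphism `L ≃ Kᵐ` of the basis carries it onto the column
span of `X_B`. Both dimensions therefore equal `dim_K span {x j}`.
-/

open Module Submodule

theorem finrank_span_image_of_injective {R M N : Type*} [Ring R] [AddCommGroup M] [Module R M]
    [AddCommGroup N] [Module R N] {f : M →ₗ[R] N} (hf : Function.Injective f) (s : Set M) :
    finrank R (span R (f '' s)) = finrank R (span R s) := by
  rw [← map_span]
  exact (equivMapOfInjective f hf _).finrank_eq.symm

theorem Module.Basis.rank_coordMatrix_eq_finrank_span {R M ι κ : Type*} [CommRing R] [AddCommGroup M] [Module R M]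
    [Fintype ι] (b : Basis ι R M) (x : κ → M) [Fintype κ] :
    (Matrix.of fun (u : ι) (j : κ) => b.repr (x j) u).rank = finrank R (span R (Set.range x)) := by
  rw [Matrix.rank_eq_finrank_span_cols, ← finrank_span_image_of_injective b.equivFun.injective,
    ← Set.range_comp]
  rfl

section Moore

variable {K L : Type*} [CommSemiring K] [Semiring L] [Algebra K L]

def AlgEquiv.mooreMap (θ : L ≃ₐ[K] L) (n : ℕ) : L →ₗ[K] (Fin n → L) :=
  LinearMap.pi fun i : Fin n => (θ ^ (i : ℕ)).toLinearMap

theorem AlgEquiv.mooreMap_apply (θ : L ≃ₐ[K] L) (n : ℕ) (y : L) :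
    θ.mooreMap n y = fun i : Fin n => (θ ^ (i : ℕ)) y :=
  rfl

theorem AlgEquiv.mooreMap_injective (θ : L ≃ₐ[K] L) {n : ℕ} (hn : 0 < n) :
    Function.Injective (θ.mooreMap n) := fun y z h => by
  simpa [mooreMap_apply] using congrFun h ⟨0, hn⟩

end Moore

theorem w2_eq_w3_general {K L : Type*} [Field K] [Field L] [Algebra K L]
    (θ : L ≃ₐ[K] L) {m n N : ℕ} (b : Module.Basis (Fin m) K L)
    (hnpos : 0 < n) (x : Fin N → L) :
    Module.finrank K (Submodule.span K
      (Set.range fun j : Fin N => fun i : Fin n => (θ ^ (i : ℕ)) (x j))) =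
    (Matrix.of fun (u : Fin m) (j : Fin N) => b.repr (x j) u).rank := by
  have columns_eq : (Set.range fun j : Fin N => fun i : Fin n => (θ ^ (i : ℕ)) (x j)) =
      θ.mooreMap n '' Set.range x := by
    rw [← Set.range_comp]
    rfl
  rw [columns_eq, finrank_span_image_of_injective (θ.mooreMap_injective hnpos), b.rank_coordMatrix_eq_finrank_span]

/-- For X ∈ Lᴺ, the maximal number of K-linearly independent columns of the Moore matrix
X^θ = (θ^i(x_j)) (i.e. the K-dimension of the K-span of its columns) equals the rank of
the coordinate matrix X_B ∈ K^{m×N} of the x_j in a K-basis B: w₂(X) = w₃(X). -/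
theorem w2_eq_w3 {K L : Type*} [Field K] [Field L] [Algebra K L]
    (θ : L ≃ₐ[K] L) {m n N : ℕ} (b : Module.Basis (Fin m) K L)
    (hnpos : 0 < n) (hn : orderOf θ = n) (x : Fin N → L) :
    Module.finrank K (Submodule.span K
      (Set.range fun j : Fin N => fun i : Fin n => (θ ^ (i : ℕ)) (x j))) =
    (Matrix.of fun (u : Fin m) (j : Fin N) => b.repr (x j) u).rank :=
  w2_eq_w3_general θ b hnpos x
end

section
/- For any X ∈ L^N, the L-rank of the matrix X^θ is at most the number of K-linearly independent columns of X^θ, with equality when K equals the fixed field L^θ of θ. -/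
/-!
Every column of the Moore matrix `X^θ` is fixed by the `θ`-semilinear map
`σ v = (θ (v (i - 1)))ᵢ`, which rotates the rows cyclically (this uses `θ ^ n = 1`).
Pick an `L`-basis of the column span among the columns: it is also `K`-linearly independent,
which gives the inequality. If `K` is the fixed field of `θ`, every column is an `L`-combination
of this basis whose coefficients are, by uniqueness, fixed by `θ`, hence lie in `K`; so the
basis also spans the columns over `K`, and the two dimensions agree.
-/

open Module Submodule

theorem mul_pow_val_sub_one {G : Type*} [Monoid G] {g : G} {n : ℕ} [NeZero n]
    (hg : orderOf g = n) (i : Fin n) : g * g ^ ((i - 1 : Fin n) : ℕ) = g ^ (i : ℕ) := by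
  rw [← pow_succ', ← pow_mod_orderOf, hg]
  congr 1
  obtain ⟨k, rfl⟩ : ∃ k, n = k + 1 := Nat.exists_eq_succ_of_ne_zero (NeZero.ne n)
  rw [Fin.coe_sub_one]
  split_ifs with h
  · simp [h]
  · have : (i : ℕ) ≠ 0 := Fin.val_ne_iff.mpr h
    rw [Nat.sub_add_cancel (Nat.pos_of_ne_zero this), Nat.mod_eq_of_lt i.isLt]

section Descent

variable {K L M : Type*} [CommRing K] [Ring L] [Algebra K L] [AddCommMonoid M]
  [Module L M] [Module K M] [IsScalarTower K L M] {θ : L →+* L}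

theorem mem_span_of_semilinear_fixed (hθ : ∀ y, θ y = y → y ∈ (algebraMap K L).range)
    (σ : M →ₛₗ[θ] M) {ι : Type*} {b : ι → M} (hb : LinearIndependent L b)
    (hσb : ∀ i, σ (b i) = b i) {v : M} (hv : v ∈ span L (Set.range b)) (hσv : σ v = v) :
    v ∈ span K (Set.range b) := by
  rw [← Finsupp.range_linearCombination] at hv
  obtain ⟨l, rfl⟩ := hv
  have hσl : σ (Finsupp.linearCombination L b l) =
      Finsupp.linearCombination L b (l.mapRange θ (map_zero θ)) := by
    rw [Finsupp.linearCombination_apply, Finsupp.linearCombination_apply,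
      Finsupp.sum_mapRange_index fun i => zero_smul L (b i), Finsupp.sum, map_sum]
    simp only [map_smulₛₗ, hσb]
    rfl
  have hl : l.mapRange θ (map_zero θ) = l := hb (hσl ▸ hσv)
  rw [Finsupp.linearCombination_apply]
  refine sum_mem fun i _ => ?_
  obtain ⟨k, hk⟩ := hθ (l i) (by simpa using congr($hl i))
  change l i • b i ∈ _
  rw [← hk, algebraMap_smul]
  exact smul_mem _ _ (subset_span ⟨i, rfl⟩)

end Descent

def twistedRotate {L : Type*} [Semiring L] (θ : L →+* L) (n : ℕ) [NeZero n] :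
    (Fin n → L) →ₛₗ[θ] Fin n → L where
  toFun v i := θ (v (i - 1))
  map_add' v w := by ext; simp
  map_smul' a v := by ext; simp

theorem twistedRotate_moore {K L : Type*} [CommSemiring K] [Semiring L] [Algebra K L]
    (θ : L ≃ₐ[K] L) {n : ℕ} [NeZero n] (hθ : orderOf θ = n) (a : L) :
    twistedRotate (θ : L →+* L) n (fun i : Fin n => (θ ^ (i : ℕ)) a) =
      fun i : Fin n => (θ ^ (i : ℕ)) a := by
  ext i
  rw [← mul_pow_val_sub_one hθ i]
  rfl

section FiniteRank

variable (K : Type*) {L M : Type*} [Field K] [Field L] [Algebra K L] [AddCommGroup M]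
  [Module L M] [Module K M] [IsScalarTower K L M]

theorem LinearIndepOn.finrank_span_eq_finrank_span {t : Set M} [Fintype t]
    (ht : LinearIndepOn L id t) : finrank L (span L t) = finrank K (span K t) := by
  rw [finrank_span_set_eq_card ht, finrank_span_set_eq_card (ht.restrict_scalars' K)]

theorem finrank_span_le_finrank_span {s : Set M} (hs : s.Finite) :
    finrank L (span L s) ≤ finrank K (span K s) := by
  obtain ⟨t, hts, hspan, ht⟩ := exists_linearIndependent L s
  have : Fintype t := (hs.subset hts).fintype
  have : FiniteDimensional K (span K s) := FiniteDimensional.span_of_finite K hs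
  calc finrank L (span L s) = finrank K (span K t) := by
        rw [← hspan, LinearIndepOn.finrank_span_eq_finrank_span K ht]
    _ ≤ finrank K (span K s) := finrank_mono (span_mono hts)

end FiniteRank

theorem finrank_span_eq_finrank_span_of_fixed {K L M : Type*} [Field K] [Field L] [Algebra K L]
    [AddCommGroup M] [Module L M] [Module K M] [IsScalarTower K L M] {θ : L →+* L}
    (hθ : ∀ y, θ y = y → y ∈ (algebraMap K L).range) (σ : M →ₛₗ[θ] M) {s : Set M}
    (hs : s.Finite) (hσs : ∀ v ∈ s, σ v = v) :
    finrank L (span L s) = finrank K (span K s) := by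
  obtain ⟨t, hts, hspan, ht⟩ := exists_linearIndependent L s
  have : Fintype t := (hs.subset hts).fintype
  have hspanK : span K t = span K s := by
    refine le_antisymm (span_mono hts) (span_le.mpr fun v hv => ?_)
    have hvL : v ∈ span L (Set.range ((↑) : t → M)) := by
      rw [Subtype.range_coe, hspan]; exact subset_span hv
    simpa using mem_span_of_semilinear_fixed hθ σ ht (fun w => hσs w (hts w.2)) hvL (hσs v hv)
  rw [← hspan, ← hspanK, LinearIndepOn.finrank_span_eq_finrank_span K ht]

theorem w1_le_w2_general {K L : Type*} [Field K] [Field L] [Algebra K L]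
    (θ : L ≃ₐ[K] L) {n N : ℕ}
    (hnpos : 0 < n) (hn : orderOf θ = n) (x : Fin N → L) :
    (Matrix.of fun (i : Fin n) (j : Fin N) => (θ ^ (i : ℕ)) (x j)).rank ≤
      Module.finrank K (Submodule.span K
        (Set.range fun j : Fin N => fun i : Fin n => (θ ^ (i : ℕ)) (x j))) ∧
    ((∀ y : L, θ y = y → y ∈ (algebraMap K L).range) →
      (Matrix.of fun (i : Fin n) (j : Fin N) => (θ ^ (i : ℕ)) (x j)).rank =
        Module.finrank K (Submodule.span K
          (Set.range fun j : Fin N => fun i : Fin n => (θ ^ (i : ℕ)) (x j)))) := by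
  have : NeZero n := ⟨hnpos.ne'⟩
  have hfin := Set.finite_range fun j : Fin N => fun i : Fin n => (θ ^ (i : ℕ)) (x j)
  rw [Matrix.rank_eq_finrank_span_cols]
  refine ⟨finrank_span_le_finrank_span K hfin, fun hθ =>
    finrank_span_eq_finrank_span_of_fixed hθ (twistedRotate (θ : L →+* L) n) hfin ?_⟩
  rintro _ ⟨j, rfl⟩
  exact twistedRotate_moore θ hn (x j)

/-- For X ∈ Lᴺ, the L-rank of the Moore matrix X^θ is at most the number of K-linearly
independent columns of X^θ (the K-dimension of the K-span of the columns), with equality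
when K is the fixed field of θ. -/
theorem w1_le_w2 {K L : Type*} [Field K] [Field L] [Algebra K L]
    (θ : L ≃ₐ[K] L) {m n N : ℕ} (hm : Module.finrank K L = m)
    (hnpos : 0 < n) (hn : orderOf θ = n) (hdvd : n ∣ m) (x : Fin N → L) :
    (Matrix.of fun (i : Fin n) (j : Fin N) => (θ ^ (i : ℕ)) (x j)).rank ≤
      Module.finrank K (Submodule.span K
        (Set.range fun j : Fin N => fun i : Fin n => (θ ^ (i : ℕ)) (x j))) ∧
    ((∀ y : L, θ y = y → y ∈ (algebraMap K L).range) →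
      (Matrix.of fun (i : Fin n) (j : Fin N) => (θ ^ (i : ℕ)) (x j)).rank =
        Module.finrank K (Submodule.span K
          (Set.range fun j : Fin N => fun i : Fin n => (θ ^ (i : ℕ)) (x j)))) :=
  w1_le_w2_general θ hnpos hn x
end

section
/- In L = ℚ[Y]/(Y^8+1) with θ: α ↦ α^3, the vector x = (1, α, α^2, α^4, α^5, 3α^4+2) ∈ L^6 satisfies w_1(x) = rank_L(x^θ) = 4 while w_3(x) = rank_K(x_B) = 5. -/
/-!
The orbit of `α` under `θ` is `α, α³, -α, -α³`, so on the columns `1, α, α⁴, α⁵` the matrix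
`x^θ` is a `4 × 4` matrix whose determinant is `16 α⁴ ≠ 0`; hence `x^θ` has full row rank `4`.
Over `ℚ`, the entries of `x` other than `3α⁴ + 2 = 3 · α⁴ + 2 · 1` are five distinct basis
vectors, so the columns of `x_B` span a `5`-dimensional space.
-/

open Module Submodule Matrix

theorem Module.Basis.rank_toMatrix {R M ι ι' : Type*} [CommRing R] [AddCommGroup M] [Module R M]
    [Finite ι] [Fintype ι'] (b : Basis ι R M) (v : ι' → M) :
    (b.toMatrix v).rank = finrank R (span R (Set.range v)) := by
  have hcols : Set.range (b.toMatrix v).col = b.equivFun '' Set.range v := by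
    rw [← Set.range_comp]; rfl
  rw [rank_eq_finrank_span_cols, hcols, ← LinearEquiv.coe_toLinearMap, ← map_span,
    LinearEquiv.finrank_map_eq]

theorem Matrix.rank_eq_card_height_of_det_submatrix_ne_zero {R m n : Type*} [CommRing R]
    [IsDomain R] [Fintype m] [DecidableEq m] [Fintype n] (A : Matrix m n R) (c : m → n)
    (h : (A.submatrix id c).det ≠ 0) : A.rank = Fintype.card m :=
  le_antisymm A.rank_le_card_height <|
    (rank_of_det_ne_zero h).symm.le.trans (A.rank_submatrix_le id c)

theorem AlgEquiv.pow_apply_of_apply_eq_pow {R A : Type*} [CommSemiring R] [Semiring A]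
    [Algebra R A] {θ : A ≃ₐ[R] A} {a : A} {k : ℕ} (h : θ a = a ^ k) (n : ℕ) :
    (θ ^ n) a = a ^ (k ^ n) := by
  induction n with
  | zero => rw [pow_zero, pow_zero, pow_one]; rfl
  | succ n ih => rw [pow_succ, AlgEquiv.mul_apply, h, map_pow, ih, ← pow_mul, pow_succ]

theorem Matrix.det_of_signed_pow_0145 {R : Type*} [CommRing R] (a c : R) :
    (of fun i j => ![a, c, -a, -c] i ^ ![0, 1, 4, 5] j).det =
      -(4 * a * c * (a ^ 4 - c ^ 4) ^ 2) := by
  simp [det_succ_row_zero, Fin.sum_univ_succ, Fin.succAbove]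
  ring

section

variable {L : Type*} [Field L] [Algebra ℚ L] {α : L}

theorem pow_apply_eq_of_pow_eight_eq_neg_one (hα : α ^ 8 = -1) {θ : L ≃ₐ[ℚ] L}
    (hθ : θ α = α ^ 3) (i : Fin 4) : (θ ^ (i : ℕ)) α = ![α, α ^ 3, -α, -α ^ 3] i := by
  rw [AlgEquiv.pow_apply_of_apply_eq_pow hθ]
  fin_cases i <;> norm_num
  · linear_combination α * hα
  · linear_combination (α ^ 19 - α ^ 11 + α ^ 3) * hα

theorem rank_galois_conjugates_eq_four (hα : α ^ 8 = -1) (θ : L ≃ₐ[ℚ] L) (hθ : θ α = α ^ 3) :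
    (of fun (i : Fin 4) (j : Fin 6) =>
      (θ ^ (i : ℕ)) (![1, α, α ^ 2, α ^ 4, α ^ 5, 3 * α ^ 4 + 2] j)).rank = 4 := by
  have hcols (j : Fin 4) : ![1, α, α ^ 2, α ^ 4, α ^ 5, 3 * α ^ 4 + 2] (![0, 1, 3, 4] j) =
      α ^ (![0, 1, 4, 5] j) := by
    fin_cases j <;> simp
  have hsub : (of fun (i : Fin 4) (j : Fin 6) =>
      (θ ^ (i : ℕ)) (![1, α, α ^ 2, α ^ 4, α ^ 5, 3 * α ^ 4 + 2] j)).submatrix id ![0, 1, 3, 4] =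
      of fun i j => ![α, α ^ 3, -α, -α ^ 3] i ^ ![0, 1, 4, 5] j := by
    ext i j
    rw [submatrix_apply, of_apply, of_apply, id, hcols, map_pow,
      pow_apply_eq_of_pow_eight_eq_neg_one hα hθ]
  have hdet : -(4 * α * α ^ 3 * (α ^ 4 - (α ^ 3) ^ 4) ^ 2) = 16 * α ^ 4 := by
    linear_combination (-4 * α ^ 20 + 12 * α ^ 12 - 16 * α ^ 4) * hα
  have hα0 : α ≠ 0 := by rintro rfl; norm_num at hα
  have : CharZero L := charZero_of_injective_algebraMap (algebraMap ℚ L).injective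
  refine (rank_eq_card_height_of_det_submatrix_ne_zero _ ![0, 1, 3, 4] ?_).trans
    (Fintype.card_fin 4)
  rw [hsub, det_of_signed_pow_0145, hdet]
  exact mul_ne_zero (by norm_num) (pow_ne_zero 4 hα0)

end

theorem rank_basis_toMatrix_eq_five {K L : Type*} [CommRing K] [Nontrivial K] [Ring L]
    [Algebra K L] {α : L} (b : Basis (Fin 8) K L) (hb : ∀ i : Fin 8, b i = α ^ (i : ℕ)) :
    (b.toMatrix ![1, α, α ^ 2, α ^ 4, α ^ 5, 3 * α ^ 4 + 2]).rank = 5 := by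
  let e : Fin 5 → Fin 8 := ![0, 1, 2, 4, 5]
  have hspan : span K (Set.range ![1, α, α ^ 2, α ^ 4, α ^ 5, 3 * α ^ 4 + 2]) =
      span K (Set.range (b ∘ e)) := by
    refine span_eq_span (Set.range_subset_iff.2 fun j => ?_)
      (Set.range_subset_iff.2 fun i => subset_span ⟨![0, 1, 2, 3, 4] i, ?_⟩)
    · induction j using Fin.lastCases with
      | cast k => exact subset_span ⟨k, by fin_cases k <;> simp [e, hb]⟩
      | last =>
        have hlast : 3 * α ^ 4 + 2 = (3 : K) • (b ∘ e) 3 + (2 : K) • (b ∘ e) 0 := by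
          simp [e, hb, Algebra.smul_def, map_ofNat]
        have h3 : (b ∘ e) 3 ∈ span K (Set.range (b ∘ e)) := subset_span ⟨3, rfl⟩
        have h0 : (b ∘ e) 0 ∈ span K (Set.range (b ∘ e)) := subset_span ⟨0, rfl⟩
        simpa [hlast] using add_mem (smul_mem _ (3 : K) h3) (smul_mem _ (2 : K) h0)
    · fin_cases i <;> simp [e, hb]
  rw [b.rank_toMatrix, hspan, finrank_span_eq_card (b.linearIndependent.comp e (by decide)),
    Fintype.card_fin]

/-- In L = ℚ[Y]/(Y⁸+1) with θ(α) = α³ (of order 4), the vector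
x = (1, α, α², α⁴, α⁵, 3α⁴+2) ∈ L⁶ satisfies w₁(x) = rank_L(x^θ) = 4 while
w₃(x) = rank_ℚ(x_B) = 5. -/
theorem example_ranks_differ {L : Type*} [Field L] [Algebra ℚ L]
    (α : L) (hα : α ^ 8 = -1)
    (b : Module.Basis (Fin 8) ℚ L) (hb : ∀ i : Fin 8, b i = α ^ (i : ℕ))
    (θ : L ≃ₐ[ℚ] L) (hθ : θ α = α ^ 3)
    (x : Fin 6 → L)
    (hx : x = ![1, α, α ^ 2, α ^ 4, α ^ 5, 3 * α ^ 4 + 2]) :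
    (Matrix.of fun (i : Fin 4) (j : Fin 6) => (θ ^ (i : ℕ)) (x j)).rank = 4 ∧
    (Matrix.of fun (u : Fin 8) (j : Fin 6) => b.repr (x j) u).rank = 5 := by
  subst hx
  exact ⟨rank_galois_conjugates_eq_four hα θ hθ, rank_basis_toMatrix_eq_five b hb⟩
end

section
/- Suppose t ≤ (N−k)/2 and the Nonlinear reconstruction problem has a solution (V,f). Then for any solution (W,N₀) of the Linearized reconstruction problem (W ≠ 0, deg_θ W ≤ t, deg_θ N₀ < k+t, W(y_i) = N₀(g_i) for all i), one has N₀ = W·f in L[X;θ]; hence (W,f) solves Nonlinear reconstruction. -/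
open Polynomial

/-- Twisted multiplication of θ-polynomials. -/
noncomputable def skewMul {K L : Type*} [Field K] [Field L] [Algebra K L]
    (θ : L ≃ₐ[K] L) (p q : L[X]) : L[X] :=
  ∑ i ∈ p.support, ∑ j ∈ q.support, C (p.coeff i * (θ ^ i) (q.coeff j)) * X ^ (i + j)

/-! The errors `e i = y i - f (g i)` are roots of `V`, so they span a `K`-space `E` of dimension at
most `deg V ≤ t`: the roots of a nonzero θ-polynomial form a `K`-space of dimension at most its
degree, since `L^θ = K`. Some `A ≠ 0` of degree `≤ t` annihilates `W(E)`. The difference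
`R = N₀ - W f` sends every `g i` to `W (e i) ∈ W(E)`, so `A R` vanishes on the `N` independent
`g i` while `deg (A R) < 2t + k ≤ N`. Hence `A R = 0`, and `R = 0` as `L[X;θ]` has no zero
divisors. -/

section SkewPolynomial

variable {K L : Type*} [Field K] [Field L] [Algebra K L] (θ : L ≃ₐ[K] L)

theorem skewEval_eq_sum (p : L[X]) (v : L) :
    skewEval θ p v = p.sum fun i a => a * (θ ^ i) v := by
  rw [skewEval, Polynomial.sum_def]

@[simp]
theorem skewEval_zero_right (p : L[X]) : skewEval θ p 0 = 0 := by
  simp [skewEval]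

@[simp]
theorem skewEval_monomial (n : ℕ) (a v : L) : skewEval θ (monomial n a) v = a * (θ ^ n) v := by
  rw [skewEval_eq_sum, sum_monomial_index]
  simp

theorem skewEval_add (p q : L[X]) (v : L) :
    skewEval θ (p + q) v = skewEval θ p v + skewEval θ q v := by
  simp only [skewEval_eq_sum]
  exact sum_add_index _ _ _ (fun _ => zero_mul _) fun _ _ _ => add_mul _ _ _

theorem skewEval_sub (p q : L[X]) (v : L) :
    skewEval θ (p - q) v = skewEval θ p v - skewEval θ q v := by
  rw [eq_sub_iff_add_eq, ← skewEval_add, sub_add_cancel]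

theorem skewEval_finset_sum {ι : Type*} (s : Finset ι) (p : ι → L[X]) (v : L) :
    skewEval θ (∑ i ∈ s, p i) v = ∑ i ∈ s, skewEval θ (p i) v :=
  map_sum (AddMonoidHom.mk' (skewEval θ · v) (skewEval_add θ · · v)) p s

@[simp]
theorem skewEval_C (a v : L) : skewEval θ (C a) v = a * v := by
  simpa using skewEval_monomial θ 0 a v

@[simp]
theorem skewEval_X (v : L) : skewEval θ X v = θ v := by
  rw [← monomial_one_one_eq_X, skewEval_monomial, pow_one, one_mul]

theorem skewEval_X_sub_C (a v : L) : skewEval θ (X - C a) v = θ v - a * v := by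
  rw [skewEval_sub, skewEval_X, skewEval_C]

@[simps]
noncomputable def skewEvalLinearMap (p : L[X]) : L →ₗ[K] L where
  toFun := skewEval θ p
  map_add' v w := by
    simp only [skewEval, map_add, mul_add, Finset.sum_add_distrib]
  map_smul' c v := by
    simp only [skewEval, RingHom.id_apply, Finset.smul_sum, map_smul, mul_smul_comm]

theorem skewEval_sub_right (p : L[X]) (v w : L) :
    skewEval θ p (v - w) = skewEval θ p v - skewEval θ p w :=
  map_sub (skewEvalLinearMap θ p) v w

theorem skewMul_eq_sum (p q : L[X]) :
    skewMul θ p q = p.sum fun i b => q.sum fun j c => C (b * (θ ^ i) c) * X ^ (i + j) := by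
  simp only [skewMul, Polynomial.sum_def]

@[simp]
theorem skewMul_zero_left (q : L[X]) : skewMul θ 0 q = 0 := by
  simp [skewMul]

theorem skewMul_monomial (m n : ℕ) (b c : L) :
    skewMul θ (monomial m b) (monomial n c) = monomial (m + n) (b * (θ ^ m) c) := by
  rw [skewMul_eq_sum, sum_monomial_index, sum_monomial_index] <;>
    simp [← C_mul_X_pow_eq_monomial, Polynomial.sum_def]

theorem skewMul_add_left (p q r : L[X]) :
    skewMul θ (p + q) r = skewMul θ p r + skewMul θ q r := by
  simp only [skewMul_eq_sum]
  refine sum_add_index _ _ _ (fun _ => by simp [Polynomial.sum_def]) fun _ _ _ => ?_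
  simp only [Polynomial.sum_def, ← Finset.sum_add_distrib, add_mul, map_add]

theorem skewMul_add_right (p q r : L[X]) :
    skewMul θ p (q + r) = skewMul θ p q + skewMul θ p r := by
  simp only [skewMul_eq_sum, ← Polynomial.sum_add]
  exact Finset.sum_congr rfl fun _ _ =>
    sum_add_index _ _ _ (fun _ => by simp) fun _ _ _ => by rw [map_add, mul_add, C_add, add_mul]

theorem skewMul_sub_right (p q r : L[X]) :
    skewMul θ p (q - r) = skewMul θ p q - skewMul θ p r := by
  rw [eq_sub_iff_add_eq, ← skewMul_add_right, sub_add_cancel]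

theorem skewEval_skewMul (p q : L[X]) (v : L) :
    skewEval θ (skewMul θ p q) v = skewEval θ p (skewEval θ q v) := by
  simp only [skewMul, skewEval_finset_sum, C_mul_X_pow_eq_monomial, skewEval_monomial]
  simp only [skewEval, map_sum, Finset.mul_sum, map_mul, pow_add, AlgEquiv.mul_apply, mul_assoc]

theorem natDegree_skewMul_le (p q : L[X]) :
    (skewMul θ p q).natDegree ≤ p.natDegree + q.natDegree :=
  natDegree_sum_le_of_forall_le _ _ fun i hi => natDegree_sum_le_of_forall_le _ _ fun j hj =>
    (natDegree_C_mul_X_pow_le _ _).trans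
      (add_le_add (le_natDegree_of_mem_supp i hi) (le_natDegree_of_mem_supp j hj))

theorem coeff_skewMul_natDegree_add (p q : L[X]) :
    (skewMul θ p q).coeff (p.natDegree + q.natDegree)
      = p.leadingCoeff * (θ ^ p.natDegree) q.leadingCoeff := by
  rw [skewMul, finsetSum_coeff, Finset.sum_eq_single p.natDegree]
  · rw [finsetSum_coeff, Finset.sum_eq_single q.natDegree]
    · rw [coeff_C_mul_X_pow, if_pos rfl, leadingCoeff, leadingCoeff]
    · intro j hj hne
      have := le_natDegree_of_mem_supp j hj
      rw [coeff_C_mul_X_pow, if_neg (by omega)]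
    · intro h
      simp [notMem_support_iff.1 h]
  · intro i hi hne
    have := le_natDegree_of_mem_supp i hi
    rw [finsetSum_coeff]
    refine Finset.sum_eq_zero fun j hj => ?_
    have := le_natDegree_of_mem_supp j hj
    rw [coeff_C_mul_X_pow, if_neg (by omega)]
  · intro h
    simp [notMem_support_iff.1 h]

theorem coeff_skewMul_natDegree_add_ne_zero {p q : L[X]} (hp : p ≠ 0) (hq : q ≠ 0) :
    (skewMul θ p q).coeff (p.natDegree + q.natDegree) ≠ 0 := by
  rw [coeff_skewMul_natDegree_add]
  exact mul_ne_zero (leadingCoeff_ne_zero.2 hp)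
    ((map_ne_zero_iff _ (θ ^ p.natDegree).injective).2 (leadingCoeff_ne_zero.2 hq))

theorem natDegree_skewMul {p q : L[X]} (hp : p ≠ 0) (hq : q ≠ 0) :
    (skewMul θ p q).natDegree = p.natDegree + q.natDegree :=
  (natDegree_skewMul_le θ p q).antisymm
    (le_natDegree_of_ne_zero (coeff_skewMul_natDegree_add_ne_zero θ hp hq))

theorem skewMul_ne_zero {p q : L[X]} (hp : p ≠ 0) (hq : q ≠ 0) : skewMul θ p q ≠ 0 :=
  fun h => coeff_skewMul_natDegree_add_ne_zero θ hp hq (by rw [h, coeff_zero])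

theorem skewMul_monomial_X_sub_C (n : ℕ) (a b : L) :
    skewMul θ (monomial n b) (X - C a) = monomial (n + 1) b - monomial n (b * (θ ^ n) a) := by
  rw [skewMul_sub_right, ← monomial_one_one_eq_X, ← monomial_zero_left, skewMul_monomial,
    skewMul_monomial, map_one, mul_one, add_zero]

theorem exists_eq_skewMul_X_sub_C_add_C (a : L) (P : L[X]) :
    ∃ Q r, P = skewMul θ Q (X - C a) + C r := by
  induction P using Polynomial.induction_on' with
  | add p q hp hq =>
    obtain ⟨Q, r, rfl⟩ := hp
    obtain ⟨Q', r', rfl⟩ := hq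
    exact ⟨Q + Q', r + r', by rw [skewMul_add_left, C_add]; abel⟩
  | monomial n b =>
    induction n generalizing b with
    | zero => exact ⟨0, b, by simp⟩
    | succ n ih =>
      obtain ⟨Q, r, hQ⟩ := ih (b * (θ ^ n) a)
      refine ⟨monomial n b + Q, r, ?_⟩
      rw [skewMul_add_left, skewMul_monomial_X_sub_C, add_assoc, ← hQ, sub_add_cancel]

theorem skewEval_X_sub_C_div_self (u : L) : skewEval θ (X - C (θ u / u)) u = 0 := by
  rcases eq_or_ne u 0 with rfl | hu
  · simp
  · rw [skewEval_X_sub_C, div_mul_cancel₀ _ hu, sub_self]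

/-- Divide on the right by `X - C (θ u / u)`, which kills `u`: the remainder `C r` has
`P(u) = r u`. -/
theorem exists_eq_skewMul_of_skewEval_eq_zero {P : L[X]} {u : L} (hu : u ≠ 0)
    (hPu : skewEval θ P u = 0) : ∃ Q, P = skewMul θ Q (X - C (θ u / u)) := by
  obtain ⟨Q, r, rfl⟩ := exists_eq_skewMul_X_sub_C_add_C θ (θ u / u) P
  rw [skewEval_add, skewEval_skewMul, skewEval_X_sub_C_div_self, skewEval_zero_right, zero_add,
    skewEval_C, mul_eq_zero, or_iff_left hu] at hPu
  exact ⟨Q, by rw [hPu, C_0, add_zero]⟩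

end SkewPolynomial

section RootSpace

variable {K L : Type*} [Field K] [Field L] [Algebra K L] {θ : L ≃ₐ[K] L}

theorem exists_smul_eq_of_skewEval_X_sub_C_div_self_eq_zero
    (hfix : ∀ z : L, θ z = z → z ∈ (algebraMap K L).range) {u z : L} (hu : u ≠ 0)
    (hz : skewEval θ (X - C (θ u / u)) z = 0) : ∃ c : K, c • u = z := by
  have hθu : θ u ≠ 0 := (map_ne_zero_iff θ θ.injective).2 hu
  rw [skewEval_X_sub_C, sub_eq_zero] at hz
  obtain ⟨c, hc⟩ := hfix (z / u) (by rw [map_div₀, hz]; field_simp)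
  exact ⟨c, by rw [Algebra.smul_def, hc, div_mul_cancel₀ _ hu]⟩

theorem finrank_le_natDegree_of_forall_skewEval_eq_zero
    (hfix : ∀ z : L, θ z = z → z ∈ (algebraMap K L).range) {P : L[X]} (hP : P ≠ 0)
    (U : Submodule K L) [FiniteDimensional K U] (hU : ∀ u ∈ U, skewEval θ P u = 0) :
    Module.finrank K U ≤ P.natDegree := by
  induction hn : P.natDegree using Nat.strong_induction_on generalizing P U with
  | _ n ih =>
  rcases eq_or_ne U ⊥ with rfl | hU0
  · simp
  obtain ⟨u, huU, hu⟩ := Submodule.exists_mem_ne_zero_of_ne_bot hU0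
  obtain ⟨Q, rfl⟩ := exists_eq_skewMul_of_skewEval_eq_zero θ hu (hU u huU)
  have hQ : Q ≠ 0 := by rintro rfl; exact hP (skewMul_zero_left θ _)
  rw [natDegree_skewMul θ hQ (X_sub_C_ne_zero _), natDegree_X_sub_C] at hn
  -- Rank–nullity for `D = X - C (θ u / u)` on `U`: `D` maps `U` into the roots of `Q`, and its
  -- kernel is the line `K u` because `L^θ = K`.
  set D := skewEvalLinearMap θ (X - C (θ u / u))
  have hrange : Module.finrank K (U.map D) ≤ Q.natDegree := by
    refine ih _ (by omega) hQ _ ?_ rfl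
    rintro _ ⟨v, hv, rfl⟩
    rw [skewEvalLinearMap_apply, ← skewEval_skewMul]
    exact hU v hv
  have hker : Module.finrank K (LinearMap.ker (D.domRestrict U)) ≤ 1 := by
    refine finrank_le_one ⟨⟨u, huU⟩, skewEval_X_sub_C_div_self θ u⟩ fun w => ?_
    obtain ⟨c, hc⟩ := exists_smul_eq_of_skewEval_X_sub_C_div_self_eq_zero hfix hu w.2
    exact ⟨c, by ext; exact hc⟩
  have := (D.domRestrict U).finrank_range_add_finrank_ker
  rw [LinearMap.range_domRestrict] at this
  omega

theorem eq_zero_of_forall_skewEval_eq_zero_of_linearIndependent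
    (hfix : ∀ z : L, θ z = z → z ∈ (algebraMap K L).range) {ι : Type*} [Fintype ι]
    {g : ι → L} (hg : LinearIndependent K g) {P : L[X]} (hP : P.natDegree < Fintype.card ι)
    (hPg : ∀ i, skewEval θ P (g i) = 0) : P = 0 := by
  by_contra hP0
  have : FiniteDimensional K (Submodule.span K (Set.range g)) :=
    FiniteDimensional.span_of_finite K (Set.finite_range g)
  have := finrank_le_natDegree_of_forall_skewEval_eq_zero hfix hP0 (Submodule.span K (Set.range g))
    fun x hx => Submodule.span_le (p := LinearMap.ker (skewEvalLinearMap θ P)).2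
      (Set.range_subset_iff.2 hPg) hx
  rw [finrank_span_eq_card hg] at this
  omega

end RootSpace

section Annihilator

variable {K L : Type*} [Field K] [Field L] [Algebra K L] (θ : L ≃ₐ[K] L)

theorem exists_skewEval_eq_zero_of_fin (n : ℕ) (v : Fin n → L) :
    ∃ A : L[X], A ≠ 0 ∧ A.natDegree ≤ n ∧ ∀ i, skewEval θ A (v i) = 0 := by
  induction n with
  | zero => exact ⟨1, one_ne_zero, by simp, finZeroElim⟩
  | succ n ih =>
    obtain ⟨A, hA0, hAn, hA⟩ := ih fun i => v i.castSucc
    set w := skewEval θ A (v (Fin.last n))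
    have hXw : (X - C (θ w / w) : L[X]) ≠ 0 := X_sub_C_ne_zero _
    refine ⟨skewMul θ (X - C (θ w / w)) A, skewMul_ne_zero θ hXw hA0, ?_, ?_⟩
    · rw [natDegree_skewMul θ hXw hA0, natDegree_X_sub_C]
      omega
    · refine Fin.lastCases ?_ fun i => ?_ <;> rw [skewEval_skewMul]
      · exact skewEval_X_sub_C_div_self θ w
      · rw [hA i, skewEval_zero_right]

theorem exists_skewEval_eq_zero_of_finiteDimensional (F : Submodule K L) [FiniteDimensional K F] :
    ∃ A : L[X], A ≠ 0 ∧ A.natDegree ≤ Module.finrank K F ∧ ∀ x ∈ F, skewEval θ A x = 0 := by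
  set b := Module.finBasis K F
  obtain ⟨A, hA0, hAn, hA⟩ := exists_skewEval_eq_zero_of_fin θ _ fun i => (b i : L)
  have hAF : (skewEvalLinearMap θ A).comp F.subtype = 0 := b.ext hA
  exact ⟨A, hA0, hAn, fun x hx => LinearMap.congr_fun hAF ⟨x, hx⟩⟩

end Annihilator

theorem linearized_reconstruction_solves_nonlinear_general {K L : Type*} [Field K] [Field L]
    [Algebra K L] (θ : L ≃ₐ[K] L)
    (hfix : ∀ z : L, θ z = z → z ∈ (algebraMap K L).range)
    {N k t : ℕ} (hk : k ≤ N) (ht : 2 * t ≤ N - k)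
    (g y : Fin N → L) (hg : LinearIndependent K g)
    (V f : L[X]) (hV : V ≠ 0) (hdV : V.natDegree ≤ t) (hdf : f.natDegree < k)
    (hVf : ∀ i, skewEval θ V (y i) = skewEval θ V (skewEval θ f (g i)))
    (W N₀ : L[X]) (hdW : W.natDegree ≤ t) (hdN : N₀.natDegree < k + t)
    (hWN : ∀ i, skewEval θ W (y i) = skewEval θ N₀ (g i)) :
    N₀ = skewMul θ W f ∧
    ∀ i, skewEval θ W (y i) = skewEval θ W (skewEval θ f (g i)) := by
  set e := fun i => y i - skewEval θ f (g i)
  set E := Submodule.span K (Set.range e)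
  have : FiniteDimensional K E := FiniteDimensional.span_of_finite K (Set.finite_range e)
  have hVE : E ≤ LinearMap.ker (skewEvalLinearMap θ V) := Submodule.span_le.2 <|
    Set.range_subset_iff.2 fun i => by simp [e, skewEval_sub_right, hVf]
  have hE : Module.finrank K E ≤ t :=
    (finrank_le_natDegree_of_forall_skewEval_eq_zero hfix hV E fun _ hx => hVE hx).trans hdV
  set F := E.map (skewEvalLinearMap θ W)
  obtain ⟨A, hA0, hAF, hA⟩ := exists_skewEval_eq_zero_of_finiteDimensional θ F
  set R := N₀ - skewMul θ W f
  have hRF : ∀ i, skewEval θ R (g i) ∈ F := fun i =>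
    ⟨e i, Submodule.subset_span ⟨i, rfl⟩,
      by simp [e, R, skewEval_sub, skewEval_sub_right, skewEval_skewMul, hWN]⟩
  have hdR : R.natDegree < k + t := (natDegree_sub_le _ _).trans_lt <|
    max_lt hdN ((natDegree_skewMul_le θ W f).trans_lt (by omega))
  have hAR : skewMul θ A R = 0 := by
    refine eq_zero_of_forall_skewEval_eq_zero_of_linearIndependent hfix hg ?_ fun i => ?_
    · have : Module.finrank K F ≤ Module.finrank K E := Submodule.finrank_map_le _ _
      have := natDegree_skewMul_le θ A R
      simp only [Fintype.card_fin]
      omega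
    · rw [skewEval_skewMul]
      exact hA _ (hRF i)
  have hN₀ : N₀ = skewMul θ W f :=
    sub_eq_zero.1 (by_contra fun hR => skewMul_ne_zero θ hA0 hR hAR)
  exact ⟨hN₀, fun i => by rw [hWN, hN₀, skewEval_skewMul]⟩

/-- If t ≤ (N−k)/2 and Nonlinear reconstruction has a solution (V,f), then any solution
(W,N₀) of Linearized reconstruction satisfies N₀ = W·f in L[X;θ]; hence (W,f) solves
Nonlinear reconstruction. -/
theorem linearized_reconstruction_solves_nonlinear {K L : Type*} [Field K] [Field L]
    [Algebra K L] [FiniteDimensional K L] (θ : L ≃ₐ[K] L)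
    (hord : orderOf θ = Module.finrank K L)
    (hsf : Squarefree (LinearMap.charpoly θ.toLinearMap))
    (hfix : ∀ z : L, θ z = z → z ∈ (algebraMap K L).range)
    {N k t : ℕ} (hN : N ≤ Module.finrank K L) (hk : k ≤ N) (ht : 2 * t ≤ N - k)
    (g y : Fin N → L) (hg : LinearIndependent K g)
    (V f : L[X]) (hV : V ≠ 0) (hdV : V.natDegree ≤ t) (hdf : f.natDegree < k)
    (hVf : ∀ i, skewEval θ V (y i) = skewEval θ V (skewEval θ f (g i)))
    (W N₀ : L[X]) (hW : W ≠ 0) (hdW : W.natDegree ≤ t) (hdN : N₀.natDegree < k + t)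
    (hWN : ∀ i, skewEval θ W (y i) = skewEval θ N₀ (g i)) :
    N₀ = skewMul θ W f ∧
    ∀ i, skewEval θ W (y i) = skewEval θ W (skewEval θ f (g i)) :=
  linearized_reconstruction_solves_nonlinear_general θ hfix hk ht g y hg V f hV hdV hdf hVf W N₀ hdW
    hdN hWN
end
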